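/- Let E be a sharply orthocomplete S-dominating effect algebra. Then S(E), with the inherited operations, is a complete orthomodular lattice which is bifull in E. -/

import Mathlib

universe u v

/-- An effect algebra: a partial algebra `(E; ⊕, 0, 1)` with `0 ≠ 1`, where `⊕` is
partially defined (domain `D`), commutative and associative where defined, every
element has a unique orthosupplement (`compl`, skolemizing axiom (Eiii)), and
`1 ⊕ x` defined implies `x = 0`. -/
structure EffectAlgebra (E : Type u) where
  D : E → E → Prop
  oplus : E → E → E
  zero : E
  one : E
  zero_ne_one : zero ≠ one
  D_comm : ∀ x y, D x y → D y x
  oplus_comm : ∀ x y, D x y → oplus x y = oplus y x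
  assoc : ∀ x y z, D x y → D (oplus x y) z →
      D y z ∧ D x (oplus y z) ∧ oplus (oplus x y) z = oplus x (oplus y z)
  assoc' : ∀ x y z, D y z → D x (oplus y z) →
      D x y ∧ D (oplus x y) z ∧ oplus (oplus x y) z = oplus x (oplus y z)
  compl : E → E
  D_compl : ∀ x, D x (compl x)
  oplus_compl : ∀ x, oplus x (compl x) = one
  compl_unique : ∀ x y, D x y → oplus x y = one → y = compl x
  one_max : ∀ x, D one x → x = zero

namespace EffectAlgebra

variable {E : Type u} (A : EffectAlgebra E)

/-- The induced order: `x ≤ y` iff `x ⊕ z = y` for some `z`. -/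
def le (x y : E) : Prop := ∃ z, A.D x z ∧ A.oplus x z = y

def IsLB (S : Set E) (m : E) : Prop := ∀ x ∈ S, A.le m x
def IsUB (S : Set E) (m : E) : Prop := ∀ x ∈ S, A.le x m

/-- `m` is the infimum of `S` computed within the subposet `P`. -/
def IsInfIn (P : Set E) (S : Set E) (m : E) : Prop :=
  m ∈ P ∧ A.IsLB S m ∧ ∀ z ∈ P, A.IsLB S z → A.le z m

/-- `m` is the supremum of `S` computed within the subposet `P`. -/
def IsSupIn (P : Set E) (S : Set E) (m : E) : Prop :=
  m ∈ P ∧ A.IsUB S m ∧ ∀ z ∈ P, A.IsUB S z → A.le m z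

/-- `w` is sharp iff the meet `w ∧ w'` exists in `E` and equals `0`. -/
def Sharp (w : E) : Prop := A.IsInfIn Set.univ {w, A.compl w} A.zero

/-- The set `S(E)` of sharp elements. -/
def sharpSet : Set E := {w | A.Sharp w}

def HasMeet (x y : E) : Prop := ∃ m, A.IsInfIn Set.univ {x, y} m
def HasJoin (x y : E) : Prop := ∃ j, A.IsSupIn Set.univ {x, y} j

/-- Every `x` has a least sharp element above it, which is the infimum of the sharp
elements above `x` both in `E` and in `S(E)`. -/
def SharplyDominating : Prop :=
  ∀ x : E, ∃ w, A.Sharp w ∧ A.le x w ∧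
    A.IsInfIn Set.univ {v | A.Sharp v ∧ A.le x v} w ∧
    A.IsInfIn A.sharpSet {v | A.Sharp v ∧ A.le x v} w

/-- Sharply dominating, and `x ∧ w` exists for every `x ∈ E`, `w ∈ S(E)`. -/
def SDominating : Prop :=
  A.SharplyDominating ∧ ∀ x w : E, A.Sharp w → A.HasMeet x w

end EffectAlgebra

/-- `SumDef A l s` : the orthosum of the finite list `l` is defined and equals `s`. -/
inductive EffectAlgebra.SumDef {E : Type u} (A : EffectAlgebra E) : List E → E → Prop
  | nil : EffectAlgebra.SumDef A [] A.zero
  | cons {x : E} {l : List E} {s : E} : EffectAlgebra.SumDef A l s → A.D x s →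
      EffectAlgebra.SumDef A (x :: l) (A.oplus x s)

namespace EffectAlgebra

variable {E : Type u} (A : EffectAlgebra E)

/-- A family is orthogonal iff every finite subfamily has a defined orthosum. -/
def Orthogonal {ι : Type v} (x : ι → E) : Prop :=
  ∀ l : List ι, l.Nodup → ∃ s, A.SumDef (l.map x) s

/-- The set of finite partial orthosums of a family. -/
def finiteSums {ι : Type v} (x : ι → E) : Set E :=
  {s | ∃ l : List ι, l.Nodup ∧ A.SumDef (l.map x) s}

/-- `v = ⊕ x` : the family is orthogonal and `v` is the supremum in `E` of all
finite partial orthosums. -/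
def HasOrthoSum {ι : Type v} (x : ι → E) (v : E) : Prop :=
  A.Orthogonal x ∧ A.IsSupIn Set.univ (A.finiteSums x) v

/-- Every family dominated elementwise by an orthogonal family of sharp
elements has an orthosum. -/
def SharplyOrthocomplete : Prop :=
  ∀ (ι : Type u) (x w : ι → E), (∀ k, A.Sharp (w k)) → A.Orthogonal w →
    (∀ k, A.le (x k) (w k)) → ∃ v, A.HasOrthoSum x v

/-- `c` is central: for every `y` the meets `y ∧ c`, `y ∧ c'` exist and
`y = (y ∧ c) ∨ (y ∧ c')`. -/
def Central (c : E) : Prop :=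
  ∀ y : E, ∃ m₁ m₂, A.IsInfIn Set.univ {y, c} m₁ ∧
    A.IsInfIn Set.univ {y, A.compl c} m₂ ∧ A.IsSupIn Set.univ {m₁, m₂} y

/-- The center `C(E)`. -/
def centerSet : Set E := {c | A.Central c}

def CentrallyDominating : Prop :=
  ∀ x : E, ∃ c, A.Central c ∧ A.le x c ∧
    A.IsInfIn Set.univ {d | A.Central d ∧ A.le x d} c ∧
    A.IsInfIn A.centerSet {d | A.Central d ∧ A.le x d} c

def CentrallyOrthocomplete : Prop :=
  ∀ (ι : Type u) (x c : ι → E), (∀ k, A.Central (c k)) → A.Orthogonal c →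
    (∀ k, A.le (x k) (c k)) → ∃ v, A.HasOrthoSum x v

/-- `P` is bifull in `E`: for `S ⊆ P`, the join of `S` in `P` exists iff the join
of `S` in `E` exists, and then they coincide. -/
def Bifull (P : Set E) : Prop :=
  ∀ S ⊆ P, (∀ s, A.IsSupIn P S s → A.IsSupIn Set.univ S s) ∧
    (∀ s, A.IsSupIn Set.univ S s → A.IsSupIn P S s)

/-- The subposet `P` is a complete lattice: every subset of `P` has a supremum
(and an infimum) computed within `P`. -/
def CompleteIn (P : Set E) : Prop :=
  ∀ S ⊆ P, (∃ s, A.IsSupIn P S s) ∧ (∃ m, A.IsInfIn P S m)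

/-- `E` is a complete lattice. -/
def Complete : Prop :=
  ∀ S : Set E, (∃ s, A.IsSupIn Set.univ S s) ∧ (∃ m, A.IsInfIn Set.univ S m)

/-- The induced order of `E` is a lattice. -/
def LatticeOrdered : Prop := ∀ x y : E, A.HasMeet x y ∧ A.HasJoin x y

/-- `x ↔ y` : `x ∨ y = x ⊕ (y ⊖ (x ∧ y))`. -/
def Compatible (x y : E) : Prop :=
  ∃ m j z, A.IsInfIn Set.univ {x, y} m ∧ A.IsSupIn Set.univ {x, y} j ∧
    A.D m z ∧ A.oplus m z = y ∧ A.D x z ∧ A.oplus x z = j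

/-- An MV-effect algebra: a lattice effect algebra all of whose pairs of elements
are compatible. -/
def MV : Prop := A.LatticeOrdered ∧ ∀ x y : E, A.Compatible x y

/-- `nx = x ⊕ ⋯ ⊕ x` (`n` times) is defined. -/
def nTimesDef (n : ℕ) (x : E) : Prop := ∃ s, A.SumDef (List.replicate n x) s

/-- `ord x < ∞` for every nonzero `x`. -/
def IsArchimedean : Prop := ∀ x : E, x ≠ A.zero → ∃ n : ℕ, ¬ A.nTimesDef n x

def Atom (a : E) : Prop := a ≠ A.zero ∧ ∀ b, A.le b a → b = A.zero ∨ b = a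

def Atomic : Prop := ∀ x : E, x ≠ A.zero → ∃ a, A.Atom a ∧ A.le a x

/-- The subposet `P` (closed under `'`) is an orthomodular lattice. -/
def OrthomodularIn (P : Set E) : Prop :=
  (∀ x ∈ P, ∀ y ∈ P, (∃ m, A.IsInfIn P {x, y} m) ∧ (∃ j, A.IsSupIn P {x, y} j)) ∧
  A.zero ∈ P ∧ A.one ∈ P ∧ (∀ x ∈ P, A.compl x ∈ P) ∧
  (∀ x ∈ P, A.IsInfIn P {x, A.compl x} A.zero ∧ A.IsSupIn P {x, A.compl x} A.one) ∧
  (∀ x ∈ P, ∀ y ∈ P, A.le x y →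
    ∃ m, A.IsInfIn P {y, A.compl x} m ∧ A.IsSupIn P {x, m} y)

def DistributiveIn (P : Set E) : Prop :=
  ∀ x ∈ P, ∀ y ∈ P, ∀ z ∈ P, ∀ jyz mxy mxz m : E,
    A.IsSupIn P {y, z} jyz → A.IsInfIn P {x, y} mxy → A.IsInfIn P {x, z} mxz →
    A.IsInfIn P {x, jyz} m → A.IsSupIn P {mxy, mxz} m

/-- The subposet `P` is a Boolean algebra (complemented distributive lattice with
bounds, complement given by `'`). -/
def BooleanIn (P : Set E) : Prop :=
  (∀ x ∈ P, ∀ y ∈ P, (∃ m, A.IsInfIn P {x, y} m) ∧ (∃ j, A.IsSupIn P {x, y} j)) ∧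
  A.zero ∈ P ∧ A.one ∈ P ∧ (∀ x ∈ P, A.compl x ∈ P) ∧
  (∀ x ∈ P, A.IsInfIn P {x, A.compl x} A.zero ∧ A.IsSupIn P {x, A.compl x} A.one) ∧
  A.DistributiveIn P

/-- A block: a maximal set of pairwise compatible elements. -/
def Block (M : Set E) : Prop :=
  (∀ x ∈ M, ∀ y ∈ M, A.Compatible x y) ∧
  ∀ N : Set E, M ⊆ N → (∀ x ∈ N, ∀ y ∈ N, A.Compatible x y) → N = M

def AtomIn (M : Set E) (a : E) : Prop :=
  a ∈ M ∧ a ≠ A.zero ∧ ∀ b ∈ M, A.le b a → b = A.zero ∨ b = a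

def AtomicIn (M : Set E) : Prop :=
  ∀ x ∈ M, x ≠ A.zero → ∃ a, A.AtomIn M a ∧ A.le a x

end EffectAlgebra

/-!
Sharp elements are closed under `⊕` and under existing meets, and a supremum in `E` of sharp
elements is sharp. Given a set `S` of sharp elements, Zorn's lemma gives a maximal set `G` of
sharp elements whose finite orthosums lie below every upper bound of `S`. Sharp
orthocompleteness provides `v = ⊕ G`, which is sharp and below every upper bound of `S`, and
maximality of `G` makes `v` an upper bound of `S`. So every subset of `S(E)` has a supremum in
`E` that lies in `S(E)`: this is completeness and bifullness at once, meets follow by De Morgan,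
and orthomodularity comes from `y = x ⊕ (y ∧ x')` for `x ≤ y` with `y` sharp.
-/

namespace EffectAlgebra

variable {E : Type u} {A : EffectAlgebra E}

lemma compl_compl (x : E) : A.compl (A.compl x) = x :=
  (A.compl_unique _ _ (A.D_comm _ _ (A.D_compl x))
    (by rw [← A.oplus_comm _ _ (A.D_compl x), A.oplus_compl])).symm

lemma compl_injective : Function.Injective A.compl := fun x y h => by
  rw [← compl_compl x, h, compl_compl]

lemma compl_one : A.compl A.one = A.zero :=
  A.one_max _ (A.D_compl A.one)

lemma oplus_compl_oplus {x z : E} (h : A.D x z) :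
    A.D z (A.compl (A.oplus x z)) ∧ A.oplus z (A.compl (A.oplus x z)) = A.compl x := by
  obtain ⟨hd, hd', he⟩ := A.assoc _ _ _ h (A.D_compl _)
  exact ⟨hd, A.compl_unique _ _ hd' (by rw [← he, A.oplus_compl])⟩

lemma D_zero (x : E) : A.D x A.zero ∧ A.oplus x A.zero = x := by
  have h := oplus_compl_oplus (A.D_compl (A.compl x))
  rwa [A.oplus_compl, compl_one, compl_compl] at h

lemma oplus_zero (x : E) : A.oplus x A.zero = x := (D_zero x).2

lemma zero_oplus (x : E) : A.oplus A.zero x = x := by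
  rw [A.oplus_comm _ _ (A.D_comm _ _ (D_zero x).1), oplus_zero]

lemma compl_zero : A.compl A.zero = A.one := by
  rw [← compl_one, compl_compl]

lemma oplus_left_cancel {x a b : E} (ha : A.D x a) (hb : A.D x b)
    (h : A.oplus x a = A.oplus x b) : a = b := by
  have key : ∀ c, A.D x c → A.compl c = A.oplus (A.compl (A.oplus x c)) x := fun c hc => by
    obtain ⟨hd, he⟩ := oplus_compl_oplus hc
    have := (oplus_compl_oplus hd).2
    rwa [he, compl_compl, eq_comm] at this
  exact compl_injective (by rw [key a ha, key b hb, h])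

lemma eq_zero_of_oplus_eq_zero {a b : E} (hd : A.D a b) (h : A.oplus a b = A.zero) :
    b = A.zero :=
  A.one_max _ (A.D_comm _ _ (A.assoc _ _ _ hd (by rw [h]; exact A.D_comm _ _ (D_zero _).1)).1)

lemma le_refl (x : E) : A.le x x := ⟨A.zero, D_zero x⟩

lemma zero_le (x : E) : A.le A.zero x := ⟨x, A.D_comm _ _ (D_zero x).1, zero_oplus x⟩

lemma le_trans {x y z : E} (h₁ : A.le x y) (h₂ : A.le y z) : A.le x z := by
  obtain ⟨a, hda, rfl⟩ := h₁
  obtain ⟨b, hdb, rfl⟩ := h₂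
  obtain ⟨-, hd, he⟩ := A.assoc _ _ _ hda hdb
  exact ⟨A.oplus a b, hd, he.symm⟩

lemma eq_zero_of_le_zero {a : E} (h : A.le a A.zero) : a = A.zero := by
  obtain ⟨z, hd, he⟩ := h
  exact eq_zero_of_oplus_eq_zero (A.D_comm _ _ hd) (by rw [← A.oplus_comm _ _ hd]; exact he)

lemma le_antisymm {x y : E} (h₁ : A.le x y) (h₂ : A.le y x) : x = y := by
  obtain ⟨a, hda, rfl⟩ := h₁
  obtain ⟨b, hdb, hb⟩ := h₂
  obtain ⟨hab, hd, he⟩ := A.assoc _ _ _ hda hdb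
  have hab0 : A.oplus a b = A.zero :=
    oplus_left_cancel hd (D_zero x).1 (by rw [← he, hb, oplus_zero])
  have ha : a = A.zero := eq_zero_of_oplus_eq_zero (A.D_comm _ _ hab)
    (by rw [A.oplus_comm _ _ (A.D_comm _ _ hab)]; exact hab0)
  rw [ha, oplus_zero]

lemma D_iff_le_compl {x z : E} : A.D x z ↔ A.le z (A.compl x) := by
  refine ⟨fun h => ⟨_, oplus_compl_oplus h⟩, ?_⟩
  rintro ⟨c, hdc, hc⟩
  exact (A.assoc' _ _ _ hdc (by rw [hc]; exact A.D_compl x)).1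

lemma compl_le_compl {x y : E} (h : A.le x y) : A.le (A.compl y) (A.compl x) := by
  obtain ⟨z, hd, rfl⟩ := h
  obtain ⟨hd', he⟩ := oplus_compl_oplus hd
  exact ⟨z, A.D_comm _ _ hd', by rw [A.oplus_comm _ _ (A.D_comm _ _ hd'), he]⟩

lemma compl_le_compl_iff {x y : E} : A.le (A.compl y) (A.compl x) ↔ A.le x y :=
  ⟨fun h => by simpa only [compl_compl] using compl_le_compl h, compl_le_compl⟩

lemma le_oplus_right {x z : E} (h : A.D x z) : A.le z (A.oplus x z) :=
  ⟨x, A.D_comm _ _ h, A.oplus_comm _ _ (A.D_comm _ _ h)⟩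

lemma oplus_le_oplus_left {a b c : E} (h : A.le a b) (hd : A.D c b) :
    A.D c a ∧ A.le (A.oplus c a) (A.oplus c b) := by
  obtain ⟨z, hz, rfl⟩ := h
  obtain ⟨hca, hd', he⟩ := A.assoc' _ _ _ hz hd
  exact ⟨hca, z, hd', he⟩

lemma isLB_pair {x y z : E} : A.IsLB {x, y} z ↔ A.le z x ∧ A.le z y := by
  simp [IsLB]

lemma isUB_pair {x y z : E} : A.IsUB {x, y} z ↔ A.le x z ∧ A.le y z := by
  simp [IsUB]

lemma IsSupIn.unique {P S : Set E} {m m' : E} (h : A.IsSupIn P S m)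
    (h' : A.IsSupIn P S m') : m = m' :=
  le_antisymm (h.2.2 m' h'.1 h'.2.1) (h'.2.2 m h.1 h.2.1)

lemma IsSupIn.of_univ {P S : Set E} {m : E} (h : A.IsSupIn Set.univ S m) (hm : m ∈ P) :
    A.IsSupIn P S m :=
  ⟨hm, h.2.1, fun z _ hz => h.2.2 z trivial hz⟩

lemma IsInfIn.of_univ {P S : Set E} {m : E} (h : A.IsInfIn Set.univ S m) (hm : m ∈ P) :
    A.IsInfIn P S m :=
  ⟨hm, h.2.1, fun z _ hz => h.2.2 z trivial hz⟩

lemma compl_image_compl_image (S : Set E) : A.compl '' (A.compl '' S) = S := by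
  simp [Set.image_image, compl_compl]

lemma IsInfIn.compl_isSupIn {S : Set E} {m : E} (h : A.IsInfIn Set.univ S m) :
    A.IsSupIn Set.univ (A.compl '' S) (A.compl m) := by
  refine ⟨trivial, ?_, fun z _ hz => ?_⟩
  · rintro _ ⟨s, hs, rfl⟩
    exact compl_le_compl (h.2.1 s hs)
  · rw [← compl_le_compl_iff, compl_compl]
    exact h.2.2 _ trivial fun s hs => by
      simpa only [compl_compl] using compl_le_compl (hz _ ⟨s, hs, rfl⟩)

lemma IsSupIn.compl_isInfIn {S : Set E} {m : E} (h : A.IsSupIn Set.univ S m) :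
    A.IsInfIn Set.univ (A.compl '' S) (A.compl m) := by
  refine ⟨trivial, ?_, fun z _ hz => ?_⟩
  · rintro _ ⟨s, hs, rfl⟩
    exact compl_le_compl (h.2.1 s hs)
  · rw [← compl_le_compl_iff, compl_compl]
    exact h.2.2 _ trivial fun s hs => by
      simpa only [compl_compl] using compl_le_compl (hz _ ⟨s, hs, rfl⟩)

lemma sharp_zero : A.Sharp A.zero :=
  ⟨trivial, isLB_pair.2 ⟨le_refl _, zero_le _⟩, fun z _ hz => hz _ (by simp)⟩

lemma Sharp.compl {w : E} (h : A.Sharp w) : A.Sharp (A.compl w) := by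
  rwa [Sharp, compl_compl, Set.pair_comm]

lemma sharp_one : A.Sharp A.one := by
  simpa only [compl_zero] using (sharp_zero (A := A)).compl

lemma Sharp.isSupIn_compl {w : E} (h : A.Sharp w) :
    A.IsSupIn Set.univ {w, A.compl w} A.one := by
  have := h.compl_isSupIn
  rwa [Set.image_pair, compl_compl, compl_zero, Set.pair_comm] at this

lemma Sharp.eq_zero_of_le {w t : E} (h : A.Sharp w) (ht : A.le t w) (ht' : A.le t (A.compl w)) :
    t = A.zero :=
  eq_zero_of_le_zero (h.2.2 t trivial (isLB_pair.2 ⟨ht, ht'⟩))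

lemma Sharp.oplus_inf_compl {q x m : E} (hq : A.Sharp q) (hxq : A.le x q)
    (hm : A.IsInfIn Set.univ {A.compl x, q} m) : A.D x m ∧ A.oplus x m = q := by
  obtain ⟨z, hxz, rfl⟩ := hxq
  obtain ⟨hmx, hmq⟩ := isLB_pair.1 hm.2.1
  have hzm : A.le z m :=
    hm.2.2 z trivial (isLB_pair.2 ⟨D_iff_le_compl.1 hxz, le_oplus_right hxz⟩)
  have hxm : A.D x m := D_iff_le_compl.2 hmx
  obtain ⟨s, hzs, rfl⟩ := hzm
  obtain ⟨-, hqs, he⟩ := A.assoc' _ _ _ hzs hxm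
  have hs : s = A.zero :=
    hq.eq_zero_of_le (le_trans (le_oplus_right hzs) hmq) (D_iff_le_compl.1 hqs)
  subst hs
  exact ⟨hxm, by rw [oplus_zero]⟩

lemma SharplyDominating.exists_sharp_hull (hSD : A.SharplyDominating) (x : E) :
    ∃ w, A.Sharp w ∧ A.le x w ∧ ∀ z, A.Sharp z → A.le x z → A.le w z := by
  obtain ⟨w, hw, hxw, hinf, -⟩ := hSD x
  exact ⟨w, hw, hxw, fun z hz hxz => hinf.2.1 z ⟨hz, hxz⟩⟩

lemma SharplyDominating.sharp_of_isInfIn (hSD : A.SharplyDominating) {S : Set E} {m : E}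
    (hS : S ⊆ A.sharpSet) (hm : A.IsInfIn Set.univ S m) : A.Sharp m := by
  obtain ⟨w, hw, hmw, hmin⟩ := hSD.exists_sharp_hull m
  have hwm : A.le w m := hm.2.2 w trivial fun s hs => hmin s (hS hs) (hm.2.1 s hs)
  rwa [le_antisymm hmw hwm]

lemma SDominating.sharp_of_inf (hSD : A.SDominating) {p q m : E} (hp : A.Sharp p)
    (hq : A.Sharp q) (hm : A.IsInfIn Set.univ {p, q} m) : A.Sharp m :=
  hSD.1.sharp_of_isInfIn (Set.pair_subset hp hq) hm

lemma SDominating.sharp_oplus (hSD : A.SDominating) {p q : E} (hp : A.Sharp p)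
    (hq : A.Sharp q) (hd : A.D p q) : A.Sharp (A.oplus p q) := by
  set r := A.oplus p q
  have hr'p' : A.le (A.compl r) (A.compl p) := compl_le_compl ⟨q, hd, rfl⟩
  have hr'q' : A.le (A.compl r) (A.compl q) := compl_le_compl (le_oplus_right hd)
  -- `r ∧ p' = q`, since both are `p' ⊖ r'`
  obtain ⟨m, hm⟩ := hSD.2 r (A.compl p) hp.compl
  obtain ⟨hdm, hem⟩ := hp.compl.oplus_inf_compl hr'p' (by rwa [compl_compl])
  obtain ⟨hdq, heq⟩ := oplus_compl_oplus hd
  have hmq : m = q := oplus_left_cancel hdm (A.D_comm _ _ hdq)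
    (by rw [hem, A.oplus_comm _ _ (A.D_comm _ _ hdq), heq])
  refine ⟨trivial, isLB_pair.2 ⟨zero_le _, zero_le _⟩, fun t _ ht => ?_⟩
  obtain ⟨htr, htr'⟩ := isLB_pair.1 ht
  have htq : A.le t q := hmq ▸ hm.2.2 t trivial (isLB_pair.2 ⟨htr, le_trans htr' hr'p'⟩)
  rw [hq.eq_zero_of_le htq (le_trans htr' hr'q')]
  exact le_refl _

lemma SDominating.sharp_of_isSupIn (hSD : A.SDominating) {S : Set E} {v : E}
    (hS : S ⊆ A.sharpSet) (hv : A.IsSupIn Set.univ S v) : A.Sharp v := by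
  -- `w` is the sharp hull of `v` and `n` that of `m = v' ∧ w`; as `n ≤ s' ∧ w` for all `s ∈ S`,
  -- we get `w ≤ n'`, so `n ≤ w ∧ w' = 0`, hence `m = 0` and `v = v ⊕ m = w`
  obtain ⟨w, hw, hvw, hwmin⟩ := hSD.1.exists_sharp_hull v
  obtain ⟨m, hm⟩ := hSD.2 (A.compl v) w hw
  obtain ⟨-, hvm⟩ := hw.oplus_inf_compl hvw hm
  obtain ⟨hmv', hmw⟩ := isLB_pair.1 hm.2.1
  obtain ⟨n, hn, hmn, hnmin⟩ := hSD.1.exists_sharp_hull m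
  have hns : ∀ s ∈ S, A.le s (A.compl n) := fun s hs => by
    have hsv := hv.2.1 s hs
    obtain ⟨ms, hms⟩ := hSD.2 (A.compl s) w hw
    have hmms : A.le m ms :=
      hms.2.2 m trivial (isLB_pair.2 ⟨le_trans hmv' (compl_le_compl hsv), hmw⟩)
    have hnms := hnmin ms (hSD.sharp_of_inf (hS hs).compl hw hms) hmms
    rw [← compl_le_compl_iff, compl_compl]
    exact le_trans hnms (isLB_pair.1 hms.2.1).1
  have hwn' : A.le w (A.compl n) := hwmin _ hn.compl (hv.2.2 _ trivial hns)
  have hn0 : n = A.zero :=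
    hw.eq_zero_of_le (hnmin w hw hmw) (by simpa only [compl_compl] using compl_le_compl hwn')
  have hm0 : m = A.zero := eq_zero_of_le_zero (hn0 ▸ hmn)
  rw [hm0, oplus_zero] at hvm
  exact hvm ▸ hw

lemma SDominating.exists_isSupIn_pair (hSD : A.SDominating) {p q : E} (hp : A.Sharp p)
    (hq : A.Sharp q) : ∃ j, A.Sharp j ∧ A.IsSupIn Set.univ {p, q} j := by
  obtain ⟨m, hm⟩ := hSD.2 (A.compl p) (A.compl q) hq.compl
  refine ⟨A.compl m, (hSD.sharp_of_inf hp.compl hq.compl hm).compl, ?_⟩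
  simpa only [Set.image_pair, compl_compl] using hm.compl_isSupIn

lemma SumDef.unique {l : List E} {s t : E} (hs : A.SumDef l s) (ht : A.SumDef l t) :
    s = t := by
  induction hs generalizing t with
  | nil => cases ht; rfl
  | cons _ _ ih => cases ht with
    | cons h' _ => rw [ih h']

lemma SumDef.swap {x y : E} {l : List E} {s : E} (h : A.SumDef (x :: y :: l) s) :
    A.SumDef (y :: x :: l) s := by
  obtain _ | ⟨_ | ⟨ht, hyt⟩, hx⟩ := h
  obtain ⟨hxy, hxyt, he⟩ := A.assoc' _ _ _ hyt hx
  rw [A.oplus_comm _ _ hxy] at hxyt he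
  obtain ⟨hxt, hyxt, he'⟩ := A.assoc _ _ _ (A.D_comm _ _ hxy) hxyt
  rw [← he, he']
  exact .cons (.cons ht hxt) hyxt

lemma SumDef.perm {l l' : List E} (hp : l.Perm l') {s : E} (h : A.SumDef l s) :
    A.SumDef l' s := by
  induction hp generalizing s with
  | nil => exact h
  | cons _ _ ih => cases h with
    | cons h hd => exact .cons (ih h) hd
  | swap => exact h.swap
  | trans _ _ ih₁ ih₂ => exact ih₂ (ih₁ h)

lemma sumDef_singleton (a : E) : A.SumDef [a] a := by
  simpa only [oplus_zero] using SumDef.cons (A := A) .nil (D_zero a).1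

lemma SDominating.sharp_of_sumDef (hSD : A.SDominating) {l : List E} {s : E}
    (hl : ∀ a ∈ l, A.Sharp a) (h : A.SumDef l s) : A.Sharp s := by
  induction h with
  | nil => exact sharp_zero
  | cons _ hd ih =>
    exact hSD.sharp_oplus (hl _ List.mem_cons_self)
      (ih fun a ha => hl a (List.mem_cons_of_mem _ ha)) hd

lemma mem_finiteSums_val_iff {G : Set E} {s : E} :
    s ∈ A.finiteSums (Subtype.val : G → E) ↔
      ∃ l : List E, l.Nodup ∧ (∀ a ∈ l, a ∈ G) ∧ A.SumDef l s := by
  constructor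
  · rintro ⟨l, hnd, h⟩
    exact ⟨l.map Subtype.val, hnd.map Subtype.val_injective, by simp +contextual, h⟩
  · rintro ⟨l, hnd, hlG, h⟩
    lift l to List G using hlG
    exact ⟨l, hnd.of_map _, h⟩

variable (A) in
def OrthoBelow (U G : Set E) : Prop :=
  G ⊆ A.sharpSet ∧
    ∀ l : List E, l.Nodup → (∀ a ∈ l, a ∈ G) → ∃ s, A.SumDef l s ∧ A.IsLB U s

lemma orthoBelow_empty (U : Set E) : A.OrthoBelow U ∅ := by
  refine ⟨Set.empty_subset _, fun l _ hl => ?_⟩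
  obtain rfl : l = [] := List.eq_nil_iff_forall_not_mem.2 hl
  exact ⟨A.zero, .nil, fun u _ => zero_le u⟩

lemma orthoBelow_sUnion {U : Set E} {c : Set (Set E)} (hc : ∀ G ∈ c, A.OrthoBelow U G)
    (hchain : IsChain (· ⊆ ·) c) (hne : c.Nonempty) : A.OrthoBelow U (⋃₀ c) := by
  refine ⟨fun a ⟨G, hG, ha⟩ => (hc G hG).1 ha, fun l hnd hl => ?_⟩
  obtain ⟨G, hG, hlG⟩ :=
    hchain.directedOn.exists_mem_subset_of_finite_of_subset_sUnion hne l.finite_toSet hl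
  exact (hc G hG).2 l hnd fun a ha => hlG ha

lemma OrthoBelow.orthogonal {U G : Set E} (hG : A.OrthoBelow U G) :
    A.Orthogonal (Subtype.val : G → E) := fun l hnd => by
  obtain ⟨s, hs, -⟩ := hG.2 _ (hnd.map Subtype.val_injective) (by simp +contextual)
  exact ⟨s, hs⟩

lemma OrthoBelow.isLB_of_mem_finiteSums {U G : Set E} (hG : A.OrthoBelow U G) {s : E}
    (hs : s ∈ A.finiteSums (Subtype.val : G → E)) : A.IsLB U s := by
  obtain ⟨l, hnd, hlG, hl⟩ := mem_finiteSums_val_iff.1 hs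
  obtain ⟨s', hs', hU⟩ := hG.2 l hnd hlG
  rwa [hl.unique hs']

lemma OrthoBelow.insert {U G : Set E} (hG : A.OrthoBelow U G) {t v : E} (ht : A.Sharp t)
    (hv : ∀ s ∈ A.finiteSums (Subtype.val : G → E), A.le s v) (hvt : A.D v t)
    (hU : A.IsLB U (A.oplus v t)) : A.OrthoBelow U (insert t G) := by
  classical
  refine ⟨Set.insert_subset ht hG.1, fun l hnd hl => ?_⟩
  by_cases htl : t ∈ l
  · have hnd' := hnd.erase t
    have hl' : ∀ a ∈ l.erase t, a ∈ G := fun a ha => by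
      obtain ⟨hat, ha⟩ := hnd.mem_erase_iff.1 ha
      exact (hl a ha).resolve_left hat
    obtain ⟨σ, hσ, -⟩ := hG.2 _ hnd' hl'
    have hσv := hv σ (mem_finiteSums_val_iff.2 ⟨_, hnd', hl', hσ⟩)
    obtain ⟨htσ, hle⟩ := oplus_le_oplus_left hσv (A.D_comm _ _ hvt)
    rw [A.oplus_comm _ _ (A.D_comm _ _ hvt)] at hle
    exact ⟨A.oplus t σ, (SumDef.cons hσ htσ).perm (List.perm_cons_erase htl).symm,
      fun u hu => le_trans hle (hU u hu)⟩
  · exact hG.2 l hnd fun a ha => (hl a ha).resolve_left (ne_of_mem_of_not_mem ha htl)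

lemma exists_isSupIn_of_subset_sharpSet (hSO : A.SharplyOrthocomplete)
    (hSD : A.SDominating) {S : Set E} (hS : S ⊆ A.sharpSet) :
    ∃ v, A.Sharp v ∧ A.IsSupIn Set.univ S v := by
  set U := {u | A.IsUB S u}
  obtain ⟨G, -, hGmax⟩ := zorn_subset_nonempty {G | A.OrthoBelow U G}
    (fun c hc hchain hne => ⟨⋃₀ c, orthoBelow_sUnion hc hchain hne,
      fun _ => Set.subset_sUnion_of_mem⟩) ∅ (orthoBelow_empty U)
  have hG : A.OrthoBelow U G := hGmax.prop
  obtain ⟨v, -, hv⟩ := hSO G Subtype.val Subtype.val (fun g => hG.1 g.2) hG.orthogonal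
    (fun _ => le_refl _)
  have hvsharp : A.Sharp v := hSD.sharp_of_isSupIn (fun s hs => by
    obtain ⟨l, -, hlG, hl⟩ := mem_finiteSums_val_iff.1 hs
    exact hSD.sharp_of_sumDef (fun a ha => hG.1 (hlG a ha)) hl) hv
  have hvU : ∀ u ∈ U, A.le v u := fun u hu =>
    hv.2.2 u trivial fun s hs => hG.isLB_of_mem_finiteSums hs u hu
  -- if `s ∈ S`, then `t := v' ∧ (s ∨ v)` extends `G`, so by maximality `t ≤ v` and `t = 0`
  have hSv : A.IsUB S v := fun s hs => by
    obtain ⟨j, hj, hsvj⟩ := hSD.exists_isSupIn_pair (hS hs) hvsharp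
    obtain ⟨hsj, hvj⟩ := isUB_pair.1 hsvj.2.1
    obtain ⟨t, ht⟩ := hSD.2 (A.compl v) j hj
    obtain ⟨hvt, hvtj⟩ := hj.oplus_inf_compl hvj ht
    have hins : A.OrthoBelow U (insert t G) :=
      hG.insert (hSD.sharp_of_inf hvsharp.compl hj ht) hv.2.1 hvt
        (hvtj ▸ fun u hu => hsvj.2.2 u trivial (isUB_pair.2 ⟨hu s hs, hvU u hu⟩))
    have htG : t ∈ G := hGmax.2 hins (Set.subset_insert t G) (Set.mem_insert t G)
    have htv : A.le t v := hv.2.1 t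
      (mem_finiteSums_val_iff.2 ⟨[t], List.nodup_singleton t, by simpa, sumDef_singleton t⟩)
    rw [hvsharp.eq_zero_of_le htv (isLB_pair.1 ht.2.1).1, oplus_zero] at hvtj
    exact hvtj ▸ hsj
  exact ⟨v, hvsharp, trivial, hSv, fun u _ => hvU u⟩

lemma exists_isInfIn_of_subset_sharpSet (hSO : A.SharplyOrthocomplete)
    (hSD : A.SDominating) {S : Set E} (hS : S ⊆ A.sharpSet) :
    ∃ m, A.Sharp m ∧ A.IsInfIn Set.univ S m := by
  obtain ⟨w, hw, hwS⟩ := exists_isSupIn_of_subset_sharpSet hSO hSD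
    (S := A.compl '' S) (by rintro _ ⟨s, hs, rfl⟩; exact (hS hs).compl)
  exact ⟨A.compl w, hw.compl, compl_image_compl_image S ▸ hwS.compl_isInfIn⟩

lemma SDominating.isSupIn_sharpSet_of_le (hSD : A.SDominating) {x y m : E}
    (hy : A.Sharp y) (hxy : A.le x y) (hm : A.IsInfIn Set.univ {y, A.compl x} m) :
    A.IsSupIn A.sharpSet {x, m} y := by
  obtain ⟨hmy, hmx'⟩ := isLB_pair.1 hm.2.1
  refine ⟨hy, isUB_pair.2 ⟨hxy, hmy⟩, fun z hz hub => ?_⟩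
  obtain ⟨hxz, hmz⟩ := isUB_pair.1 hub
  obtain ⟨n, hn⟩ := hSD.2 (A.compl x) z hz
  obtain ⟨hxn, hez⟩ := hz.oplus_inf_compl hxz hn
  obtain ⟨-, hey⟩ := hy.oplus_inf_compl hxy (by rwa [Set.pair_comm])
  have hmn : A.le m n := hn.2.2 m trivial (isLB_pair.2 ⟨hmx', hmz⟩)
  rw [← hey, ← hez]
  exact (oplus_le_oplus_left hmn hxn).2

end EffectAlgebra

/-- In a sharply orthocomplete S-dominating effect algebra, `S(E)` is a complete
orthomodular lattice bifull in `E`. -/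
theorem stmt8 {E : Type u} (A : EffectAlgebra E)
    (hSO : A.SharplyOrthocomplete) (hSD : A.SDominating) :
    A.CompleteIn A.sharpSet ∧ A.OrthomodularIn A.sharpSet ∧
      A.Bifull A.sharpSet := by
  open EffectAlgebra in
  have hcomp : A.CompleteIn A.sharpSet := fun S hS => by
    obtain ⟨v, hv, hvS⟩ := exists_isSupIn_of_subset_sharpSet hSO hSD hS
    obtain ⟨m, hm, hmS⟩ := exists_isInfIn_of_subset_sharpSet hSO hSD hS
    exact ⟨⟨v, hvS.of_univ hv⟩, ⟨m, hmS.of_univ hm⟩⟩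
  have hbifull : A.Bifull A.sharpSet := fun S hS => by
    obtain ⟨v, hv, hvS⟩ := exists_isSupIn_of_subset_sharpSet hSO hSD hS
    have hvP : A.IsSupIn A.sharpSet S v := hvS.of_univ hv
    exact ⟨fun s hs => hs.unique hvP ▸ hvS, fun s hs => hs.unique hvS ▸ hvP⟩
  have horthomodular : ∀ x ∈ A.sharpSet, ∀ y ∈ A.sharpSet, A.le x y →
      ∃ m, A.IsInfIn A.sharpSet {y, A.compl x} m ∧ A.IsSupIn A.sharpSet {x, m} y :=
    fun x hx y hy hxy => by
      obtain ⟨m, hm⟩ := hSD.2 y (A.compl x) (Sharp.compl hx)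
      exact ⟨m, hm.of_univ (hSD.sharp_of_inf hy (Sharp.compl hx) hm),
        hSD.isSupIn_sharpSet_of_le hy hxy hm⟩
  refine ⟨hcomp, ⟨fun x hx y hy => (hcomp _ (Set.pair_subset hx hy)).symm, sharp_zero,
    sharp_one, fun _ hx => Sharp.compl hx,
    fun x hx => ⟨IsInfIn.of_univ hx sharp_zero, hx.isSupIn_compl.of_univ sharp_one⟩,
    horthomodular⟩, hbifull⟩
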